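/- Let p be an s-map on a quantum logic L and x, y finite-spectrum discrete observables. Then the correlation coefficient r(x,y) = c(x,y)/√(c(x,x)·c(y,y)) lies in [−1, 1], provided c(x,x) > 0 and c(y,y) > 0. -/

import Mathlib

/-- A quantum logic: an orthomodular lattice. -/
class QuantumLogic (L : Type*) extends Lattice L, BoundedOrder L, Compl L where
  compl_compl : ∀ a : L, aᶜᶜ = a
  sup_compl : ∀ a : L, a ⊔ aᶜ = ⊤
  compl_le_compl : ∀ a b : L, a ≤ b → bᶜ ≤ aᶜ
  orthomodular : ∀ a b : L, a ≤ b → b = a ⊔ aᶜ ⊓ b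

section Defs
variable {L : Type*} [QuantumLogic L]

/-- Orthogonality: `a ⊥ b` iff `a ≤ bᶜ`. -/
def Orth (a b : L) : Prop := a ≤ bᶜ

/-- Compatibility: `a ↔ b` iff they decompose via mutually orthogonal elements. -/
def Compatible (a b : L) : Prop :=
  ∃ a₁ b₁ c : L, Orth a₁ b₁ ∧ Orth a₁ c ∧ Orth b₁ c ∧ a = a₁ ⊔ c ∧ b = b₁ ⊔ c

/-- An s-map on a quantum logic. -/
structure IsSMap (p : L → L → ℝ) : Prop where
  nonneg : ∀ a b, 0 ≤ p a b
  le_one : ∀ a b, p a b ≤ 1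
  top_top : p ⊤ ⊤ = 1
  orth_zero : ∀ a b, Orth a b → p a b = 0
  add_left : ∀ a b c, Orth a b → p (a ⊔ b) c = p a c + p b c
  add_right : ∀ a b c, Orth a b → p c (a ⊔ b) = p c a + p c b

/-- A conditional system in `L`. -/
def IsCondSystem (Lc : Set L) : Prop :=
  (⊥ : L) ∉ Lc ∧ (∀ a ∈ Lc, ∀ b ∈ Lc, a ⊔ b ∈ Lc) ∧
    ∀ a ∈ Lc, ∀ b ∈ Lc, a < b → aᶜ ⊓ b ∈ Lc

/-- A conditional state `f : L × L_c → [0,1]`. -/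
structure IsConditionalState (Lc : Set L) (f : L → L → ℝ) : Prop where
  nonneg : ∀ a b, b ∈ Lc → 0 ≤ f a b
  le_one : ∀ a b, b ∈ Lc → f a b ≤ 1
  state_bot : ∀ a ∈ Lc, f ⊥ a = 0
  state_top : ∀ a ∈ Lc, f ⊤ a = 1
  state_add : ∀ a ∈ Lc, ∀ b c : L, Orth b c → f (b ⊔ c) a = f b a + f c a
  diag : ∀ a ∈ Lc, f a a = 1
  cond : ∀ s : Finset L, (↑s : Set L) ⊆ Lc →
    (∀ a ∈ s, ∀ b ∈ s, a ≠ b → Orth a b) → s.sup id ∈ Lc →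
    ∀ d : L, f d (s.sup id) = ∑ a ∈ s, f a (s.sup id) * f d a

/-- A finite-spectrum discrete observable, given by its family of atoms
(mutually orthogonal events whose join is `⊤`). -/
def IsFinObs {n : ℕ} (e : Fin n → L) : Prop :=
  (∀ i j, i ≠ j → Orth (e i) (e j)) ∧ Finset.univ.sup e = ⊤

/-- Expectation `ν(x)` of a finite-spectrum observable with values `v` and events `e`
in the state `ν(b) = p(b,b)`. -/
noncomputable def nuObs (p : L → L → ℝ) {n : ℕ} (v : Fin n → ℝ) (e : Fin n → L) : ℝ :=
  ∑ i, v i * p (e i) (e i)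

/-- First joint moment `p(x,y)` of two finite-spectrum observables. -/
noncomputable def jointMoment (p : L → L → ℝ) {n m : ℕ} (xv : Fin n → ℝ) (xe : Fin n → L)
    (yv : Fin m → ℝ) (ye : Fin m → L) : ℝ :=
  ∑ i, ∑ j, xv i * yv j * p (xe i) (ye j)

/-- Covariance `c(x,y) = p(x,y) - ν(x)ν(y)`. -/
noncomputable def covObs (p : L → L → ℝ) {n m : ℕ} (xv : Fin n → ℝ) (xe : Fin n → L)
    (yv : Fin m → ℝ) (ye : Fin m → L) : ℝ :=
  jointMoment p xv xe yv ye - nuObs p xv xe * nuObs p yv ye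

end Defs

section Aux
variable {L : Type*} [QuantumLogic L] {p : L → L → ℝ}

lemma orth_symm' {a b : L} (h : Orth a b) : Orth b a := by
  have h2 := QuantumLogic.compl_le_compl a bᶜ h
  rwa [QuantumLogic.compl_compl] at h2

lemma orth_self_compl (a : L) : Orth a aᶜ := by
  unfold Orth; rw [QuantumLogic.compl_compl]

lemma orth_sup' {ι : Type*} {a : L} {e : ι → L} {s : Finset ι}
    (h : ∀ j ∈ s, Orth a (e j)) : Orth a (s.sup e) :=
  orth_symm' (Finset.sup_le fun j hj => orth_symm' (h j hj))

lemma bot_compl_top : (⊥ : L)ᶜ = ⊤ := by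
  have := QuantumLogic.sup_compl (⊥ : L); simpa using this

lemma p_bot_right (hp : IsSMap p) (a : L) : p a ⊥ = 0 :=
  hp.orth_zero a ⊥ (by unfold Orth; rw [bot_compl_top]; exact le_top)

lemma p_bot_left (hp : IsSMap p) (a : L) : p ⊥ a = 0 :=
  hp.orth_zero ⊥ a bot_le

lemma p_sum_right (hp : IsSMap p) {ι : Type*} (e : ι → L) (s : Finset ι)
    (h : ∀ i ∈ s, ∀ j ∈ s, i ≠ j → Orth (e i) (e j)) (a : L) :
    p a (s.sup e) = ∑ j ∈ s, p a (e j) := by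
  induction s using Finset.cons_induction with
  | empty => simpa using p_bot_right hp a
  | cons i s hi ih =>
    rw [Finset.sup_cons, Finset.sum_cons,
      hp.add_right _ _ _ (orth_sup' fun j hj =>
        h i (Finset.mem_cons_self i s) j (Finset.mem_cons_of_mem hj)
          (fun hij => hi (hij ▸ hj))),
      ih fun i' hi' j hj hij =>
        h i' (Finset.mem_cons_of_mem hi') j (Finset.mem_cons_of_mem hj) hij]

lemma p_sum_left (hp : IsSMap p) {ι : Type*} (e : ι → L) (s : Finset ι)
    (h : ∀ i ∈ s, ∀ j ∈ s, i ≠ j → Orth (e i) (e j)) (a : L) :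
    p (s.sup e) a = ∑ j ∈ s, p (e j) a := by
  induction s using Finset.cons_induction with
  | empty => simpa using p_bot_left hp a
  | cons i s hi ih =>
    rw [Finset.sup_cons, Finset.sum_cons,
      hp.add_left _ _ _ (orth_sup' fun j hj =>
        h i (Finset.mem_cons_self i s) j (Finset.mem_cons_of_mem hj)
          (fun hij => hi (hij ▸ hj))),
      ih fun i' hi' j hj hij =>
        h i' (Finset.mem_cons_of_mem hi') j (Finset.mem_cons_of_mem hj) hij]

lemma p_top_right (hp : IsSMap p) (a : L) : p a ⊤ = p a a := by
  rw [← QuantumLogic.sup_compl a, hp.add_right _ _ _ (orth_self_compl a),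
    hp.orth_zero a aᶜ (orth_self_compl a), add_zero]

lemma p_top_left (hp : IsSMap p) (a : L) : p ⊤ a = p a a := by
  rw [← QuantumLogic.sup_compl a, hp.add_left _ _ _ (orth_self_compl a),
    hp.orth_zero aᶜ a le_rfl, add_zero]

end Aux

lemma cov_cs {n m : ℕ} (w : Fin n → Fin m → ℝ) (hw : ∀ i j, 0 ≤ w i j)
    (a : Fin n → ℝ) (b : Fin m → ℝ) (htot : ∑ i, ∑ j, w i j = 1) :
    ((∑ i, ∑ j, a i * b j * w i j) - (∑ i, a i * ∑ j, w i j) * (∑ j, b j * ∑ i, w i j)) ^ 2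
      ≤ ((∑ i, (a i) ^ 2 * ∑ j, w i j) - (∑ i, a i * ∑ j, w i j) ^ 2) *
        ((∑ j, (b j) ^ 2 * ∑ i, w i j) - (∑ j, b j * ∑ i, w i j) ^ 2) := by
  set μa := ∑ i, a i * ∑ j, w i j with hμa
  set μb := ∑ j, b j * ∑ i, w i j with hμb
  have hA : ∑ i, ∑ j, a i * w i j = μa := by
    rw [hμa]; exact Finset.sum_congr rfl fun i _ => (Finset.mul_sum _ _ _).symm
  have hB : ∑ i, ∑ j, b j * w i j = μb := by
    rw [Finset.sum_comm, hμb]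
    exact Finset.sum_congr rfl fun j _ => (Finset.mul_sum _ _ _).symm
  have hA2 : ∑ i, ∑ j, (a i) ^ 2 * w i j = ∑ i, (a i) ^ 2 * ∑ j, w i j :=
    Finset.sum_congr rfl fun i _ => (Finset.mul_sum _ _ _).symm
  have hB2 : ∑ i, ∑ j, (b j) ^ 2 * w i j = ∑ j, (b j) ^ 2 * ∑ i, w i j := by
    rw [Finset.sum_comm]
    exact Finset.sum_congr rfl fun j _ => (Finset.mul_sum _ _ _).symm
  have key1 : ∑ i, ∑ j, w i j * ((a i - μa) * (b j - μb))
      = (∑ i, ∑ j, a i * b j * w i j) - μa * μb := by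
    have : ∀ i j, w i j * ((a i - μa) * (b j - μb))
        = a i * b j * w i j - μb * (a i * w i j) - μa * (b j * w i j) + μa * μb * w i j :=
      fun i j => by ring
    simp only [this, Finset.sum_add_distrib, Finset.sum_sub_distrib, ← Finset.mul_sum,
      hA, hB, htot]
    ring
  have key2 : ∑ i, ∑ j, w i j * (a i - μa) ^ 2
      = (∑ i, (a i) ^ 2 * ∑ j, w i j) - μa ^ 2 := by
    have : ∀ i j, w i j * (a i - μa) ^ 2
        = (a i) ^ 2 * w i j - 2 * μa * (a i * w i j) + μa ^ 2 * w i j :=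
      fun i j => by ring
    simp only [this, Finset.sum_add_distrib, Finset.sum_sub_distrib, ← Finset.mul_sum,
      hA, hA2, htot]
    ring
  have key3 : ∑ i, ∑ j, w i j * (b j - μb) ^ 2
      = (∑ j, (b j) ^ 2 * ∑ i, w i j) - μb ^ 2 := by
    have : ∀ i j, w i j * (b j - μb) ^ 2
        = (b j) ^ 2 * w i j - 2 * μb * (b j * w i j) + μb ^ 2 * w i j :=
      fun i j => by ring
    simp only [this, Finset.sum_add_distrib, Finset.sum_sub_distrib, ← Finset.mul_sum,
      hB, hB2, htot]
    ring
  rw [← key1, ← key2, ← key3]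
  have cs := Finset.sum_mul_sq_le_sq_mul_sq Finset.univ
    (fun q : Fin n × Fin m => Real.sqrt (w q.1 q.2) * (a q.1 - μa))
    (fun q : Fin n × Fin m => Real.sqrt (w q.1 q.2) * (b q.2 - μb))
  simp only [mul_pow, Real.sq_sqrt (hw _ _)] at cs
  have e1 : ∑ q : Fin n × Fin m, (Real.sqrt (w q.1 q.2) * (a q.1 - μa)) *
      (Real.sqrt (w q.1 q.2) * (b q.2 - μb))
      = ∑ i, ∑ j, w i j * ((a i - μa) * (b j - μb)) := by
    have : ∀ q : Fin n × Fin m, Real.sqrt (w q.1 q.2) * (a q.1 - μa) *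
        (Real.sqrt (w q.1 q.2) * (b q.2 - μb)) = w q.1 q.2 * ((a q.1 - μa) * (b q.2 - μb)) := by
      intro q
      rw [show Real.sqrt (w q.1 q.2) * (a q.1 - μa) * (Real.sqrt (w q.1 q.2) * (b q.2 - μb))
        = (Real.sqrt (w q.1 q.2) * Real.sqrt (w q.1 q.2)) * ((a q.1 - μa) * (b q.2 - μb)) by ring,
        Real.mul_self_sqrt (hw _ _)]
    rw [Finset.sum_congr rfl fun q _ => this q, Fintype.sum_prod_type]
  have e2 : ∑ q : Fin n × Fin m, w q.1 q.2 * (a q.1 - μa) ^ 2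
      = ∑ i, ∑ j, w i j * (a i - μa) ^ 2 := by rw [Fintype.sum_prod_type]
  have e3 : ∑ q : Fin n × Fin m, w q.1 q.2 * (b q.2 - μb) ^ 2
      = ∑ i, ∑ j, w i j * (b j - μb) ^ 2 := by rw [Fintype.sum_prod_type]
  rw [e1, e2, e3] at cs
  exact cs

/-- the correlation coefficient lies in `[-1,1]`. -/
theorem smap_corr_mem_Icc {L : Type*} [QuantumLogic L] (p : L → L → ℝ)
    (hp : IsSMap p) {n m : ℕ} (xv : Fin n → ℝ) (xe : Fin n → L)
    (yv : Fin m → ℝ) (ye : Fin m → L)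
    (hxv : Function.Injective xv) (hx : IsFinObs xe)
    (hyv : Function.Injective yv) (hy : IsFinObs ye)
    (hcx : 0 < covObs p xv xe xv xe) (hcy : 0 < covObs p yv ye yv ye) :
    covObs p xv xe yv ye / Real.sqrt (covObs p xv xe xv xe * covObs p yv ye yv ye)
      ∈ Set.Icc (-1 : ℝ) 1 := by
  obtain ⟨hxo, hxt⟩ := hx
  obtain ⟨hyo, hyt⟩ := hy
  have hrow : ∀ i, ∑ j, p (xe i) (ye j) = p (xe i) (xe i) := fun i => by
    rw [← p_sum_right hp ye Finset.univ (fun a _ b _ hab => hyo a b hab), hyt,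
      p_top_right hp]
  have hcol : ∀ j, ∑ i, p (xe i) (ye j) = p (ye j) (ye j) := fun j => by
    rw [← p_sum_left hp xe Finset.univ (fun a _ b _ hab => hxo a b hab), hxt,
      p_top_left hp]
  have htot : ∑ i, ∑ j, p (xe i) (ye j) = 1 := by
    simp only [hrow]
    have h1 : ∀ i, p (xe i) (xe i) = p (xe i) ⊤ := fun i => (p_top_right hp _).symm
    simp only [h1]
    rw [← p_sum_left hp xe Finset.univ (fun a _ b _ hab => hxo a b hab), hxt, hp.top_top]
  have main := cov_cs (fun i j => p (xe i) (ye j)) (fun i j => hp.nonneg _ _) xv yv htot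
  simp only [hrow, hcol] at main
  have hdiagx : jointMoment p xv xe xv xe = ∑ i, (xv i) ^ 2 * p (xe i) (xe i) := by
    unfold jointMoment
    refine Finset.sum_congr rfl fun i _ => ?_
    rw [Finset.sum_eq_single i
      (fun b _ hb => by rw [hp.orth_zero _ _ (hxo i b (Ne.symm hb)), mul_zero])
      (fun h => absurd (Finset.mem_univ i) h)]
    ring
  have hdiagy : jointMoment p yv ye yv ye = ∑ j, (yv j) ^ 2 * p (ye j) (ye j) := by
    unfold jointMoment
    refine Finset.sum_congr rfl fun j _ => ?_
    rw [Finset.sum_eq_single j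
      (fun b _ hb => by rw [hp.orth_zero _ _ (hyo j b (Ne.symm hb)), mul_zero])
      (fun h => absurd (Finset.mem_univ j) h)]
    ring
  have hcs : (covObs p xv xe yv ye) ^ 2
      ≤ covObs p xv xe xv xe * covObs p yv ye yv ye := by
    unfold covObs
    rw [hdiagx, hdiagy]
    unfold jointMoment nuObs
    simpa only [pow_two] using main
  have hs : 0 < Real.sqrt (covObs p xv xe xv xe * covObs p yv ye yv ye) :=
    Real.sqrt_pos.mpr (mul_pos hcx hcy)
  have habs : |covObs p xv xe yv ye|
      ≤ Real.sqrt (covObs p xv xe xv xe * covObs p yv ye yv ye) := by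
    have h2 := Real.sqrt_le_sqrt hcs
    rwa [Real.sqrt_sq_eq_abs] at h2
  have h1 : |covObs p xv xe yv ye /
      Real.sqrt (covObs p xv xe xv xe * covObs p yv ye yv ye)| ≤ 1 := by
    rw [abs_div, abs_of_pos hs, div_le_one hs]
    exact habs
  exact Set.mem_Icc.mpr (abs_le.mp h1)
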